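/- Let B be a left semi-brace. Then B^[n] is a left ideal of B, for every positive integer n. -/
import Mathlib


/-- A left semi-brace: `(B,+)` is a left cancellative semigroup, `(B,*)` is a group
(whose identity `1` plays the role of `0` in the additive notation of the paper, and
`a⁻¹` plays the role of `a⁻`), and `a ∘ (b + c) = a ∘ b + a ∘ (a⁻ + c)` holds. -/
class LeftSemiBrace (B : Type*) extends Group B, Add B where
  add_assoc : ∀ a b c : B, a + b + c = a + (b + c)
  add_left_cancel : ∀ a b c : B, a + b = a + c → b = c
  circ_add : ∀ a b c : B, a * (b + c) = a * b + a * (a⁻¹ + c)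

namespace LeftSemiBrace

variable {B : Type*} [LeftSemiBrace B]

/-- The set `E` of additive idempotents. -/
def E (B : Type*) [LeftSemiBrace B] : Set B := {e | e + e = e}

/-- The set `G = B + 0`. -/
def G (B : Type*) [LeftSemiBrace B] : Set B := {x | ∃ b : B, x = b + 1}

/-- `λ_a (b) = a ∘ (a⁻ + b)`. -/
def lam (a b : B) : B := a * (a⁻¹ + b)

/-- `ρ_b (a) = (a⁻ + b)⁻ ∘ b`. -/
def rho (b a : B) : B := (a⁻¹ + b)⁻¹ * b

/-- `a · b = λ_a(a⁻) + a ∘ b + λ_b(b⁻)`. -/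
def dot (a b : B) : B := lam a a⁻¹ + a * b + lam b b⁻¹

/-- The group part `g_b = b + 0` of an element `b`. -/
def gp (b : B) : B := b + 1

/-- The additive inverse (within the group `(G,+)`) of the group part of an element:
for `g ∈ G` one has `neg g = -g`, since `-g_a = λ_a(a⁻) = a ∘ (a⁻ + a⁻)`. -/
def neg (a : B) : B := a * (a⁻¹ + a⁻¹)

/-- The idempotent part `e_b = -g_b + b` of an element `b`. -/
def ep (b : B) : B := neg (gp b) + b

/-- `S` is a subsemigroup of `(B,+)`. -/
def IsAddSubsemigroup (S : Set B) : Prop := ∀ x ∈ S, ∀ y ∈ S, x + y ∈ S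

/-- `S` is a subgroup of the multiplicative group `(B,∘)`. -/
def IsCircSubgroup (S : Set B) : Prop :=
  (1 : B) ∈ S ∧ (∀ x ∈ S, ∀ y ∈ S, x * y ∈ S) ∧ ∀ x ∈ S, x⁻¹ ∈ S

/-- `S` is a normal subgroup of the multiplicative group `(B,∘)`. -/
def IsCircNormal (S : Set B) : Prop :=
  IsCircSubgroup S ∧ ∀ x ∈ S, ∀ b : B, b * x * b⁻¹ ∈ S

/-- `S` is a subgroup of the group `(G,+)`. -/
def IsAddSubgroupOfG (S : Set B) : Prop :=
  S ⊆ G B ∧ (1 : B) ∈ S ∧ (∀ x ∈ S, ∀ y ∈ S, x + y ∈ S) ∧ ∀ x ∈ S, neg x ∈ S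

/-- `S` is a normal subgroup of the group `(G,+)`. -/
def IsAddNormalSubgroupOfG (S : Set B) : Prop :=
  IsAddSubgroupOfG S ∧ ∀ g ∈ G B, ∀ x ∈ S, g + x + neg g ∈ S

/-- `I` is an ideal of the left semi-brace `B` (Definition 17 of Catino–Colazzo–Stefanelli):
`I` is a subsemigroup of `(B,+)`, a normal subgroup of `(B,∘)`, `I ∩ G` is a normal
subgroup of `(G,+)`, `ρ_b(n) ∈ I` for all `b ∈ B`, `n ∈ I ∩ G`, and `λ_g(e) ∈ I` for all
`g ∈ G`, `e ∈ I ∩ E`. -/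
def IsIdeal (I : Set B) : Prop :=
  IsAddSubsemigroup I ∧ IsCircNormal I ∧ IsAddNormalSubgroupOfG (I ∩ G B) ∧
    (∀ b : B, ∀ n ∈ I ∩ G B, rho b n ∈ I) ∧
    (∀ g ∈ G B, ∀ e ∈ I ∩ E B, lam g e ∈ I)

/-- `I` is a left ideal of the left semi-brace `B`. -/
def IsLeftIdeal (I : Set B) : Prop :=
  (∀ x ∈ I, x + 1 ∈ I) ∧ IsAddSubgroupOfG (I ∩ G B) ∧
    (∀ g ∈ G B, ∀ x ∈ I, lam g x ∈ I) ∧ IsCircSubgroup I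

/-- The subgroup of `(G,+)` generated by a subset `S` of `G`. -/
def addClosure (S : Set B) : Set B :=
  ⋂₀ {T : Set B | S ⊆ T ∧ (1 : B) ∈ T ∧ (∀ x ∈ T, ∀ y ∈ T, x + y ∈ T) ∧ ∀ x ∈ T, neg x ∈ T}

/-- `X · Y`: the subgroup of `(G,+)` generated by `{x · y : x ∈ X, y ∈ Y}`. -/
def dotSet (X Y : Set B) : Set B := addClosure {z | ∃ x ∈ X, ∃ y ∈ Y, z = dot x y}

/-- `S + E = {s + e : s ∈ S, e ∈ E}`. -/
def addE (S : Set B) : Set B := {z | ∃ s ∈ S, ∃ e ∈ E B, z = s + e}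

/-- The right series of `B`: `rightSeries B n = B^(n+1)`, where `B^(1) = B` and
`B^(n+1) = B^(n) · B + E`. -/
def rightSeries (B : Type*) [LeftSemiBrace B] : ℕ → Set B
  | 0 => Set.univ
  | n + 1 => addE (dotSet (rightSeries B n) Set.univ)

/-- The left series of `B`: `leftSeries B n = B^(n+1)`, where `B^1 = B` and
`B^(n+1) = B · B^n + E`. -/
def leftSeries (B : Type*) [LeftSemiBrace B] : ℕ → Set B
  | 0 => Set.univ
  | n + 1 => addE (dotSet Set.univ (leftSeries B n))

/-- The right series of the skew left brace `G`: `rightSeriesG B n = G^(n+1)`, where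
`G^(1) = G` and `G^(n+1) = G^(n) · G`. -/
def rightSeriesG (B : Type*) [LeftSemiBrace B] : ℕ → Set B
  | 0 => G B
  | n + 1 => dotSet (rightSeriesG B n) (G B)

/-- The series `bracketSeries B n = B^[n+1]`, where `B^[1] = B` and `B^[n+1] = H_n + E`
with `H_n` the subgroup of `(G,+)` generated by `⋃_{i=1}^{n} B^[i] · B^[n+1-i]`. -/
def bracketSeries (B : Type*) [LeftSemiBrace B] : ℕ → Set B
  | 0 => Set.univ
  | n + 1 =>
      addE (addClosure (⋃ i : Fin (n + 1),
        dotSet (bracketSeries B i.1) (bracketSeries B (n - i.1))))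
  decreasing_by
  · exact i.isLt
  · exact Nat.lt_succ_of_le (Nat.sub_le n i.1)

/-- The socle `Soc(B) = {a ∈ B : ρ_a = ρ_0, λ_a = λ_0}`. -/
def Soc (B : Type*) [LeftSemiBrace B] : Set B :=
  {a | rho a = rho (1 : B) ∧ lam a = lam (1 : B)}

/-- The generalized socle `Zoc(B) = Soc(B) + E`. -/
def Zoc (B : Type*) [LeftSemiBrace B] : Set B :=
  {z | ∃ a ∈ Soc B, ∃ e ∈ E B, z = a + e}

/-- The lower central series of the group `(G,+)`:  `γ_1 = G` and `γ_{n+1}` is the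
subgroup of `(G,+)` generated by the additive commutators `-x - y + x + y` with
`x ∈ γ_n`, `y ∈ G`. -/
def lowerCentralSeriesG (B : Type*) [LeftSemiBrace B] : ℕ → Set B
  | 0 => G B
  | n + 1 => addClosure
      {z | ∃ x ∈ lowerCentralSeriesG B n, ∃ y ∈ G B, z = neg x + neg y + x + y}

/-- The group `(G,+)` is nilpotent. -/
def IsNilpotentGAdd (B : Type*) [LeftSemiBrace B] : Prop :=
  ∃ n : ℕ, lowerCentralSeriesG B n = {(1 : B)}

/-! ### Auxiliary lemmas -/

section Aux

variable {B : Type*} [LeftSemiBrace B]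

lemma cancel {a b c : B} (h : a + b = a + c) : b = c :=
  LeftSemiBrace.add_left_cancel a b c h

lemma aassoc (a b c : B) : a + b + c = a + (b + c) :=
  LeftSemiBrace.add_assoc a b c

lemma one_add' (a : B) : (1 : B) + a = a := by
  have h := LeftSemiBrace.circ_add (1 : B) a a
  rw [one_mul, one_mul, one_mul, inv_one] at h
  exact (cancel h).symm

lemma idem_add {e : B} (he : e ∈ E B) (a : B) : e + a = a := by
  have he' : e + e = e := he
  have h : e + (e + a) = e + a := by rw [← aassoc, he']
  exact cancel h

lemma mul_eq_add (a b : B) : a * b = a + lam a b := by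
  have h := LeftSemiBrace.circ_add a 1 b
  rw [one_add', mul_one] at h
  exact h

lemma lam_add (a b c : B) : lam a (b + c) = lam a b + lam a c := by
  show a * (a⁻¹ + (b + c)) = a * (a⁻¹ + b) + a * (a⁻¹ + c)
  rw [← aassoc, LeftSemiBrace.circ_add]

lemma lam_lam (a b c : B) : lam a (lam b c) = lam (a * b) c := by
  have h := LeftSemiBrace.circ_add a b (lam b c)
  rw [← mul_eq_add b c, ← mul_assoc, mul_eq_add (a * b) c] at h
  exact (cancel h).symm

lemma one_lam (b : B) : lam 1 b = b := by
  show (1 : B) * ((1 : B)⁻¹ + b) = b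
  rw [inv_one, one_add', one_mul]

lemma lam_inv_self (a : B) : lam a a⁻¹ = neg a := rfl

lemma add_neg_self (a : B) : a + neg a = 1 := by
  rw [← lam_inv_self, ← mul_eq_add, mul_inv_cancel]

lemma gp_one : gp (1 : B) = 1 := one_add' 1

lemma gp_add (x y : B) : gp (x + y) = gp x + gp y := by
  show x + y + 1 = x + 1 + (y + 1)
  rw [aassoc x 1 (y + 1), one_add', aassoc]

lemma gp_gp (x : B) : gp (gp x) = gp x := by
  show x + 1 + 1 = x + 1
  rw [aassoc, one_add' 1]

lemma gp_add_one (x : B) : gp x + 1 = gp x := gp_gp x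

lemma gp_add_neg (x : B) : gp x + neg x = 1 := by
  show x + 1 + neg x = 1
  rw [aassoc, one_add']
  exact add_neg_self x

lemma neg_eq_neg_gp (x : B) : neg x = neg (gp x) :=
  cancel ((gp_add_neg x).trans (add_neg_self (gp x)).symm)

lemma gp_neg (x : B) : gp (neg x) = neg x := by
  have h1 : gp (x + neg x) = gp 1 := by rw [add_neg_self]
  rw [gp_add, gp_one] at h1
  exact cancel (h1.trans (gp_add_neg x).symm)

lemma mem_G_iff {x : B} : x ∈ G B ↔ gp x = x := by
  constructor
  · rintro ⟨b, rfl⟩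
    show b + 1 + 1 = b + 1
    rw [aassoc, one_add' 1]
  · intro h
    exact ⟨x, h.symm⟩

lemma gp_mem_G (x : B) : gp x ∈ G B := ⟨x, rfl⟩

lemma neg_mem_G (x : B) : neg x ∈ G B := mem_G_iff.mpr (gp_neg x)

lemma G_one_mem : (1 : B) ∈ G B := mem_G_iff.mpr gp_one

lemma G_add_mem {x y : B} (hx : x ∈ G B) (hy : y ∈ G B) : x + y ∈ G B := by
  refine mem_G_iff.mpr ?_
  rw [gp_add, mem_G_iff.mp hx, mem_G_iff.mp hy]

lemma neg_add_self_of_G {x : B} (h : gp x = x) : neg x + x = 1 := by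
  have h1 : x + (neg x + x) = x := by rw [← aassoc, add_neg_self, one_add']
  have h2 : x + 1 = x := h
  exact cancel (h1.trans h2.symm)

lemma gp_add_ep (x : B) : gp x + ep x = x := by
  show gp x + (neg (gp x) + x) = x
  rw [← aassoc, add_neg_self, one_add']

lemma add_neg_gp (x : B) : x + neg (gp x) = 1 := by
  rw [← neg_eq_neg_gp]; exact add_neg_self x

lemma ep_mem_E (x : B) : ep x ∈ E B := by
  show ep x + ep x = ep x
  show neg (gp x) + x + (neg (gp x) + x) = neg (gp x) + x
  have h2 : x + (neg (gp x) + x) = x := by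
    rw [← aassoc, add_neg_gp, one_add']
  rw [aassoc, h2]

lemma E_gp_one {e : B} (he : e ∈ E B) : gp e = 1 := idem_add he 1

lemma mem_E_iff {x : B} : x ∈ E B ↔ gp x = 1 := by
  refine ⟨E_gp_one, fun h => ?_⟩
  have h2 := gp_add_ep x
  rw [h, one_add'] at h2
  exact h2 ▸ ep_mem_E x

lemma lam_mem_E (a : B) {e : B} (he : e ∈ E B) : lam a e ∈ E B := by
  have he' : e + e = e := he
  show lam a e + lam a e = lam a e
  rw [← lam_add, he']

lemma gp_lam_gp (z x : B) : gp (lam z x) = gp (lam z (gp x)) := by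
  have h : lam z x = lam z (gp x) + lam z (ep x) := by
    rw [← lam_add, gp_add_ep]
  rw [h, gp_add, E_gp_one (lam_mem_E z (ep_mem_E x)), gp_add_one]

lemma dot_eq (x y : B) : dot x y = gp (lam x y) + neg (gp y) := by
  show lam x x⁻¹ + x * y + lam y y⁻¹ = gp (lam x y) + neg (gp y)
  rw [lam_inv_self, lam_inv_self, mul_eq_add]
  have h1 : neg x + x = ep x := by
    have : neg x + x = neg (gp x) + (gp x + ep x) := by
      rw [gp_add_ep, ← neg_eq_neg_gp]
    rw [this, ← aassoc, neg_add_self_of_G (gp_gp x), one_add']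
  have h2 : lam x y + neg y = gp (lam x y) + neg (gp y) := by
    have : lam x y + neg y = gp (lam x y) + (ep (lam x y) + neg y) := by
      rw [← aassoc, gp_add_ep]
    rw [this, idem_add (ep_mem_E (lam x y)), ← neg_eq_neg_gp]
  calc neg x + (x + lam x y) + neg y
      = neg x + x + lam x y + neg y := by rw [aassoc (neg x) x (lam x y)]
    _ = ep x + lam x y + neg y := by rw [h1]
    _ = lam x y + neg y := by rw [aassoc, idem_add (ep_mem_E x)]
    _ = gp (lam x y) + neg (gp y) := h2

lemma gp_lam_eq_dot (z y : B) : gp (lam z y) = dot z y + gp y := by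
  rw [dot_eq, aassoc, neg_add_self_of_G (gp_gp y), gp_add_one]

lemma gp_mul (x y : B) : gp (x * y) = gp x + gp (lam x y) := by
  rw [mul_eq_add, gp_add]

/-! ### addClosure lemmas -/

lemma subset_addClosure (S : Set B) : S ⊆ addClosure S := fun x hx =>
  Set.mem_sInter.mpr fun _ hT => hT.1 hx

lemma one_mem_addClosure (S : Set B) : (1 : B) ∈ addClosure S :=
  Set.mem_sInter.mpr fun _ hT => hT.2.1

lemma add_mem_addClosure {S : Set B} {x y : B} (hx : x ∈ addClosure S)
    (hy : y ∈ addClosure S) : x + y ∈ addClosure S :=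
  Set.mem_sInter.mpr fun T hT =>
    hT.2.2.1 x (Set.mem_sInter.mp hx T hT) y (Set.mem_sInter.mp hy T hT)

lemma neg_mem_addClosure {S : Set B} {x : B} (hx : x ∈ addClosure S) :
    neg x ∈ addClosure S :=
  Set.mem_sInter.mpr fun T hT => hT.2.2.2 x (Set.mem_sInter.mp hx T hT)

lemma addClosure_subset {S T : Set B} (h1 : S ⊆ T) (h2 : (1 : B) ∈ T)
    (h3 : ∀ x ∈ T, ∀ y ∈ T, x + y ∈ T) (h4 : ∀ x ∈ T, neg x ∈ T) :
    addClosure S ⊆ T := fun x hx => Set.mem_sInter.mp hx T ⟨h1, h2, h3, h4⟩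

lemma addClosure_subset_closure {S T : Set B} (h : S ⊆ addClosure T) :
    addClosure S ⊆ addClosure T :=
  addClosure_subset h (one_mem_addClosure T)
    (fun _ hx _ hy => add_mem_addClosure hx hy) (fun _ hx => neg_mem_addClosure hx)

lemma addClosure_mono {S T : Set B} (h : S ⊆ T) : addClosure S ⊆ addClosure T :=
  addClosure_subset_closure (h.trans (subset_addClosure T))

lemma addClosure_subset_G {S : Set B} (h : S ⊆ G B) : addClosure S ⊆ G B :=
  addClosure_subset h G_one_mem (fun _ hx _ hy => G_add_mem hx hy)
    (fun x _ => neg_mem_G x)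

lemma dot_mem_dotSet {X Y : Set B} {x y : B} (hx : x ∈ X) (hy : y ∈ Y) :
    dot x y ∈ dotSet X Y :=
  subset_addClosure _ ⟨x, hx, y, hy, rfl⟩

lemma dotSet_mono {X X' Y Y' : Set B} (hX : X ⊆ X') (hY : Y ⊆ Y') :
    dotSet X Y ⊆ dotSet X' Y' := by
  refine addClosure_mono ?_
  rintro z ⟨x, hx, y, hy, rfl⟩
  exact ⟨x, hX hx, y, hY hy, rfl⟩

lemma dot_mem_G (x y : B) : dot x y ∈ G B := by
  rw [dot_eq]
  exact G_add_mem (gp_mem_G _) (neg_mem_G _)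

lemma dotSet_subset_G (X Y : Set B) : dotSet X Y ⊆ G B := by
  refine addClosure_subset_G ?_
  rintro z ⟨x, _, y, _, rfl⟩
  exact dot_mem_G x y

lemma mem_addE {S : Set B} (hS : S ⊆ G B) {z : B} : z ∈ addE S ↔ gp z ∈ S := by
  constructor
  · rintro ⟨s, hs, e, he, rfl⟩
    have h : gp (s + e) = s := by
      rw [gp_add, E_gp_one he, gp_add_one, mem_G_iff.mp (hS hs)]
    rw [h]; exact hs
  · intro h
    exact ⟨gp z, h, ep z, ep_mem_E z, (gp_add_ep z).symm⟩

lemma addE_mono {S T : Set B} (h : S ⊆ T) : addE S ⊆ addE T := by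
  rintro z ⟨s, hs, e, he, rfl⟩
  exact ⟨s, h hs, e, he, rfl⟩

/-! ### The bracket series -/

lemma bracketSeries_zero : bracketSeries B 0 = Set.univ := by rw [bracketSeries]

lemma bracketSeries_succ (n : ℕ) :
    bracketSeries B (n + 1) = addE (addClosure (⋃ i : Fin (n + 1),
      dotSet (bracketSeries B i.1) (bracketSeries B (n - i.1)))) := by
  rw [bracketSeries]

lemma bracketUnion_subset_G (n : ℕ) :
    (⋃ i : Fin (n + 1), dotSet (bracketSeries B i.1) (bracketSeries B (n - i.1)))
      ⊆ G B :=
  Set.iUnion_subset fun _ => dotSet_subset_G _ _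

lemma mem_bracket_succ {n : ℕ} {z : B} :
    z ∈ bracketSeries B (n + 1) ↔ gp z ∈ addClosure (⋃ i : Fin (n + 1),
      dotSet (bracketSeries B i.1) (bracketSeries B (n - i.1))) := by
  rw [bracketSeries_succ]
  exact mem_addE (addClosure_subset_G (bracketUnion_subset_G n))

lemma bracket_mono : ∀ n : ℕ, bracketSeries B (n + 1) ⊆ bracketSeries B n := by
  intro n
  induction n using Nat.strong_induction_on with
  | _ n ih =>
    match n with
    | 0 => rw [bracketSeries_zero]; exact Set.subset_univ _
    | Nat.succ n =>
      intro z hz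
      rw [mem_bracket_succ] at hz ⊢
      refine addClosure_subset ?_ (one_mem_addClosure _)
        (fun _ hx _ hy => add_mem_addClosure hx hy)
        (fun _ hx => neg_mem_addClosure hx) hz
      refine Set.iUnion_subset fun i => ?_
      rcases Nat.lt_or_ge i.1 (n + 1) with hi | hi
      · -- i.1 ≤ n : use component i of U_n
        have hsub : bracketSeries B (n + 1 - i.1) ⊆ bracketSeries B (n - i.1) := by
          have hstep : n + 1 - i.1 = (n - i.1) + 1 := by omega
          rw [hstep]
          exact ih (n - i.1) (by omega)
        refine (dotSet_mono (le_refl _) hsub).trans ?_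
        refine (Set.subset_iUnion
          (fun j : Fin (n + 1) => dotSet (bracketSeries B j.1) (bracketSeries B (n - j.1)))
          ⟨i.1, hi⟩).trans (subset_addClosure _)
      · -- i.1 = n + 1 : B^[n+1] ⊆ B^[n], use component n of U_n
        have hi' : i.1 = n + 1 := by omega
        have h1 : bracketSeries B i.1 ⊆ bracketSeries B n := by
          rw [hi']; exact ih n (by omega)
        have h2 : bracketSeries B (n + 1 - i.1) ⊆ bracketSeries B (n - n) := by
          rw [hi']
          simp only [Nat.sub_self]
          exact le_refl _
        refine (dotSet_mono h1 h2).trans ?_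
        refine (Set.subset_iUnion
          (fun j : Fin (n + 1) => dotSet (bracketSeries B j.1) (bracketSeries B (n - j.1)))
          ⟨n, by omega⟩).trans (subset_addClosure _)

end Aux

/-- `B^[n]` is a left ideal of `B` for every positive integer `n`
(here `bracketSeries B n = B^[n+1]`). -/
theorem bracketSeries_isLeftIdeal (B : Type*) [LeftSemiBrace B] (n : ℕ) :
    IsLeftIdeal (bracketSeries B n) := by
  cases n with
  | zero =>
    rw [bracketSeries_zero]
    refine ⟨fun x _ => trivial, ⟨fun x hx => hx.2, ⟨trivial, G_one_mem⟩,
      fun x hx y hy => ⟨trivial, G_add_mem hx.2 hy.2⟩,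
      fun x _ => ⟨trivial, neg_mem_G x⟩⟩,
      fun g _ x _ => trivial, trivial, fun _ _ _ _ => trivial, fun _ _ => trivial⟩
  | succ n =>
    set U : Set B := ⋃ i : Fin (n + 1),
      dotSet (bracketSeries B i.1) (bracketSeries B (n - i.1)) with hU
    set H : Set B := addClosure U with hHdef
    have hHG : H ⊆ G B := addClosure_subset_G (bracketUnion_subset_G n)
    have hchar : ∀ z : B, z ∈ bracketSeries B (n + 1) ↔ gp z ∈ H := fun z =>
      mem_bracket_succ
    have hHsub : ∀ h ∈ H, h ∈ bracketSeries B n := by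
      intro h hh
      refine bracket_mono n ((hchar h).mpr ?_)
      rw [mem_G_iff.mp (hHG hh)]
      exact hh
    have key : ∀ z x : B, gp x ∈ H → gp (lam z x) ∈ H := by
      intro z x hx
      rw [gp_lam_gp, gp_lam_eq_dot, gp_gp]
      refine add_mem_addClosure ?_ hx
      refine subset_addClosure _ ?_
      refine Set.mem_iUnion.mpr ⟨⟨0, Nat.succ_pos n⟩, ?_⟩
      exact dot_mem_dotSet (by rw [bracketSeries_zero]; trivial) (hHsub _ hx)
    have hIG : bracketSeries B (n + 1) ∩ G B = H := by
      ext z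
      constructor
      · rintro ⟨hz1, hz2⟩
        have := (hchar z).mp hz1
        rwa [mem_G_iff.mp hz2] at this
      · intro hz
        exact ⟨(hchar z).mpr (by rw [mem_G_iff.mp (hHG hz)]; exact hz), hHG hz⟩
    refine ⟨?_, ?_, ?_, ?_⟩
    · -- x + 1 ∈ I
      intro x hx
      refine (hchar _).mpr ?_
      have : gp (x + 1) = gp x := gp_gp x
      rw [this]
      exact (hchar x).mp hx
    · -- I ∩ G is a subgroup of (G,+)
      rw [hIG]
      exact ⟨hHG, one_mem_addClosure U,
        fun x hx y hy => add_mem_addClosure hx hy,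
        fun x hx => neg_mem_addClosure hx⟩
    · -- λ_g-invariance
      intro g _ x hx
      exact (hchar _).mpr (key g x ((hchar x).mp hx))
    · -- circle subgroup
      refine ⟨(hchar 1).mpr (by rw [gp_one]; exact one_mem_addClosure U), ?_, ?_⟩
      · intro x hx y hy
        refine (hchar _).mpr ?_
        rw [gp_mul]
        exact add_mem_addClosure ((hchar x).mp hx) (key x y ((hchar y).mp hy))
      · intro x hx
        refine (hchar _).mpr ?_
        have hC : gp (lam x⁻¹ x) ∈ H := key x⁻¹ x ((hchar x).mp hx)
        have hAC : gp x⁻¹ + gp (lam x⁻¹ x) = 1 := by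
          have h := gp_mul x⁻¹ x
          rw [inv_mul_cancel, gp_one] at h
          exact h.symm
        have : gp x⁻¹ = neg (gp (lam x⁻¹ x)) := by
          calc gp x⁻¹ = gp x⁻¹ + 1 := (gp_add_one _).symm
            _ = gp x⁻¹ + (gp (lam x⁻¹ x) + neg (gp (lam x⁻¹ x))) := by
                rw [add_neg_self]
            _ = gp x⁻¹ + gp (lam x⁻¹ x) + neg (gp (lam x⁻¹ x)) := (aassoc _ _ _).symm
            _ = 1 + neg (gp (lam x⁻¹ x)) := by rw [hAC]
            _ = neg (gp (lam x⁻¹ x)) := one_add' _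
        rw [this]
        exact neg_mem_addClosure hC


end LeftSemiBrace
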